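/- Let 0 < α < 1 and suppose ‖A v'(t)‖ ≤ C t^{α−1} and ‖A v''(t)‖ ≤ C t^{α−2} on (0,T], with graded mesh t_n = (nk)^γ, γ ≥ 2/(α+1). Then the truncation errors R_1^{n−1/2} defined by R_1^{1/2} = A v(t_1) − (1/k_1)∫_0^{t_1} A v(t) dt and, for n ≥ 2, R_1^{n−1/2} = A(v(t_n)+v(t_{n−1}))/2 − (1/k_n)∫_{t_{n−1}}^{t_n} A v(t) dt, satisfy Σ_{n=1}^N k_n ‖R_1^{n−1/2}‖ ≤ C k² (up to a log factor when γ = 2/(α+1)). -/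

import Mathlib

open MeasureTheory intervalIntegral Finset Real

/-!
On the first interval `[0, t₁]`, fencing `w` against `∫ C s^(α-1) ds` gives
`‖w t₁ - w s‖ ≤ (C/α) t₁^α`, so the right-rule error is `O(t₁^(α+1)) = O(k^β)` with
`β = γ (α + 1) ≥ 2`. On `[tₙ₋₁, tₙ]`, `n ≥ 2`, the trapezoidal error is at most
`sup ‖w''‖ · (tₙ - tₙ₋₁)³ / 4 ≤ C tₙ₋₁^(α-2) (tₙ - tₙ₋₁)³ / 4`, and on the graded mesh
`tₙ - tₙ₋₁ ≤ γ n^(γ-1) k^γ` and `tₙ₋₁ ≥ (nk/2)^γ`, which makes it `O(n^(β-3) k^β)`.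
Comparing with `∫ x^(β-3) dx`, the sum `∑ₙ n^(β-3)` is at most `log N` when `β = 2`
and `O(N^(β-2))` when `β > 2`; since `N k = T^(1/γ)`, both cases give the claimed bound.
-/

lemma rpow_sub_rpow_le_mul_sub {p a b : ℝ} (hp : 1 ≤ p) (ha : 0 ≤ a) (hab : a ≤ b) :
    b ^ p - a ^ p ≤ p * b ^ (p - 1) * (b - a) := by
  rcases hab.eq_or_lt with rfl | hab
  · simp
  have h := (convexOn_rpow hp).slope_le_of_hasDerivAt ha (ha.trans hab.le) hab
    (hasDerivAt_rpow_const (Or.inr hp))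
  rwa [slope_def_field, div_le_iff₀ (sub_pos.2 hab)] at h

lemma sum_Icc_rpow_le_integral {q : ℝ} (hq : q ≤ 0) {N : ℕ} (hN : 1 ≤ N) :
    ∑ n ∈ Icc 2 N, (n : ℝ) ^ q ≤ ∫ x in (1 : ℝ)..N, x ^ q := by
  have hN' : (1 : ℝ) + ((N - 1 : ℕ) : ℝ) = N := by push_cast [Nat.cast_sub hN]; ring
  have h := AntitoneOn.sum_le_integral (x₀ := 1) (a := N - 1) (f := fun x : ℝ => x ^ q)
    ((antitoneOn_rpow_Ioi_of_exponent_nonpos hq).mono fun x hx => zero_lt_one.trans_le hx.1)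
  rw [hN'] at h
  refine le_of_eq_of_le ?_ h
  rw [← Ico_add_one_right_eq_Icc, sum_Ico_eq_sum_range]
  exact sum_congr (congrArg range (by omega)) fun i _ => by push_cast; ring_nf

lemma sum_Icc_rpow_neg_one_le_log {N : ℕ} (hN : 1 ≤ N) :
    ∑ n ∈ Icc 2 N, (n : ℝ) ^ (-1 : ℝ) ≤ log N := by
  refine (sum_Icc_rpow_le_integral (by norm_num) hN).trans_eq ?_
  simp_rw [rpow_neg_one]
  rw [integral_inv_of_pos one_pos (by exact_mod_cast hN), div_one]

lemma sum_Icc_rpow_sub_one_le {p : ℝ} (hp : 0 < p) {N : ℕ} (hN : 1 ≤ N) :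
    ∑ n ∈ Icc 2 N, (n : ℝ) ^ (p - 1) ≤ (1 + p⁻¹) * (N : ℝ) ^ p := by
  have hN1 : (1 : ℝ) ≤ N := by exact_mod_cast hN
  have hNp : 0 ≤ (N : ℝ) ^ p := by positivity
  rcases le_total p 1 with hp1 | hp1
  · calc ∑ n ∈ Icc 2 N, (n : ℝ) ^ (p - 1) ≤ ∫ x in (1 : ℝ)..N, x ^ (p - 1) :=
          sum_Icc_rpow_le_integral (by linarith) hN
      _ = ((N : ℝ) ^ p - 1) / p := by
          rw [integral_rpow (Or.inl (by linarith))]; simp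
      _ ≤ (1 + p⁻¹) * (N : ℝ) ^ p := by
          rw [div_eq_mul_inv]; nlinarith [inv_pos.2 hp]
  · calc ∑ n ∈ Icc 2 N, (n : ℝ) ^ (p - 1) ≤ ∑ _n ∈ Icc 2 N, (N : ℝ) ^ (p - 1) := by
          refine sum_le_sum fun n hn => rpow_le_rpow (by positivity) ?_ (by linarith)
          exact_mod_cast (mem_Icc.1 hn).2
      _ ≤ N * (N : ℝ) ^ (p - 1) := by
          rw [sum_const, Nat.card_Icc, nsmul_eq_mul]
          gcongr
          omega
      _ = (N : ℝ) ^ p := by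
          rw [← rpow_one_add' (by positivity) (by linarith)]; ring_nf
      _ ≤ (1 + p⁻¹) * (N : ℝ) ^ p := by nlinarith [inv_pos.2 hp]

section Quadrature

variable {H : Type*} [NormedAddCommGroup H] [NormedSpace ℝ H]

noncomputable def rightRuleError (w : ℝ → H) (a b : ℝ) : ℝ :=
  (b - a) * ‖w b - (b - a)⁻¹ • ∫ s in a..b, w s‖

noncomputable def trapezoidRuleError (w : ℝ → H) (a b : ℝ) : ℝ :=
  (b - a) * ‖(2 : ℝ)⁻¹ • (w b + w a) - (b - a)⁻¹ • ∫ s in a..b, w s‖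

lemma rightRuleError_le [CompleteSpace H] {w : ℝ → H} {a b M : ℝ} (hab : a < b)
    (hw : ContinuousOn w (Set.Ioc a b)) (hM : ∀ s ∈ Set.Ioc a b, ‖w b - w s‖ ≤ M) :
    rightRuleError w a b ≤ M * (b - a) := by
  have hba : 0 < b - a := sub_pos.2 hab
  have hint : IntervalIntegrable w volume a b := by
    rw [intervalIntegrable_iff_integrableOn_Ioc_of_le hab.le]
    refine .of_bound measure_Ioc_lt_top (hw.aestronglyMeasurable measurableSet_Ioc)
      (‖w b‖ + M) ((ae_restrict_iff' measurableSet_Ioc).2 (.of_forall fun s hs => ?_))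
    have := norm_sub_norm_le (w s) (w b)
    rw [norm_sub_rev] at this
    linarith [hM s hs]
  have hrw : w b - (b - a)⁻¹ • ∫ s in a..b, w s = (b - a)⁻¹ • ∫ s in a..b, (w b - w s) := by
    rw [integral_sub intervalIntegrable_const hint, intervalIntegral.integral_const, smul_sub,
      smul_smul, inv_mul_cancel₀ hba.ne', one_smul]
  calc rightRuleError w a b = ‖∫ s in a..b, (w b - w s)‖ := by
        rw [rightRuleError, hrw, norm_smul, norm_inv, Real.norm_of_nonneg hba.le,
          mul_inv_cancel_left₀ hba.ne']
    _ ≤ M * |b - a| :=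
        norm_integral_le_of_norm_le_const fun s hs => hM s (by rwa [Set.uIoc_of_le hab.le] at hs)
    _ = M * (b - a) := by rw [abs_of_pos hba]

lemma norm_sub_le_of_norm_deriv_le_rpow {w w' : ℝ → H} {α C s b : ℝ} (hα : 0 < α) (hs : 0 < s)
    (hw : ∀ x ∈ Set.Icc s b, HasDerivAt w (w' x) x)
    (hw' : ∀ x ∈ Set.Icc s b, ‖w' x‖ ≤ C * x ^ (α - 1)) (hsb : s ≤ b) :
    ‖w b - w s‖ ≤ C / α * (b ^ α - s ^ α) := by
  refine image_norm_le_of_norm_deriv_right_le_deriv_boundary' (f := fun x => w x - w s)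
    (B := fun x => C / α * (x ^ α - s ^ α)) (B' := fun x => C * x ^ (α - 1))
    (fun x hx => ((hw x hx).continuousAt.sub continuousAt_const).continuousWithinAt)
    (fun x hx => ((hw x (Set.Ico_subset_Icc_self hx)).sub_const (w s)).hasDerivWithinAt)
    (by simp) ?_ ?_ (fun x hx => hw' x (Set.Ico_subset_Icc_self hx)) ⟨hsb, le_rfl⟩
  · exact continuousOn_const.mul ((continuousOn_id.rpow_const
      fun x hx => Or.inl (hs.trans_le hx.1).ne').sub continuousOn_const)
  · intro x hx
    refine (((hasDerivAt_rpow_const (Or.inl (hs.trans_le hx.1).ne')).sub_const (s ^ α)).const_mul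
      (C / α)).congr_deriv ?_ |>.hasDerivWithinAt
    field_simp

lemma rightRuleError_zero_le [CompleteSpace H] {w w' : ℝ → H} {α C b : ℝ} (hα : 0 < α)
    (hC : 0 ≤ C) (hb : 0 < b) (hw : ∀ x ∈ Set.Ioc 0 b, HasDerivAt w (w' x) x)
    (hw' : ∀ x ∈ Set.Ioc 0 b, ‖w' x‖ ≤ C * x ^ (α - 1)) :
    rightRuleError w 0 b ≤ C / α * b ^ (α + 1) := by
  have hM : ∀ s ∈ Set.Ioc 0 b, ‖w b - w s‖ ≤ C / α * b ^ α := by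
    intro s hs
    have hsub : Set.Icc s b ⊆ Set.Ioc 0 b := fun x hx => ⟨hs.1.trans_le hx.1, hx.2⟩
    refine (norm_sub_le_of_norm_deriv_le_rpow hα hs.1 (fun x hx => hw x (hsub hx))
      (fun x hx => hw' x (hsub hx)) hs.2).trans ?_
    have : 0 ≤ s ^ α := rpow_nonneg hs.1.le α
    gcongr
    linarith
  refine (rightRuleError_le hb (fun x hx => (hw x hx).continuousAt.continuousWithinAt) hM).trans_eq
    ?_
  rw [sub_zero, rpow_add_one hb.ne', mul_assoc]

/-- Integration by parts against the kernel `s - m`, `m` the midpoint, whose integral vanishes. -/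
lemma integral_eq_trapezoid_sub [CompleteSpace H] {w w' : ℝ → H} {a b : ℝ} (hab : a ≤ b)
    (hw : ∀ x ∈ Set.Icc a b, HasDerivAt w (w' x) x) (hw' : ContinuousOn w' (Set.Icc a b)) :
    ∫ s in a..b, w s = ((b - a) / 2) • (w b + w a)
      - ∫ s in a..b, (s - (a + b) / 2) • (w' s - w' ((a + b) / 2)) := by
  set m := (a + b) / 2 with hm
  rw [← Set.uIcc_of_le hab] at hw hw'
  have hparts : ∫ s in a..b, (s - m) • w' s
      = (b - m) • w b - (a - m) • w a - ∫ s in a..b, w s := by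
    simpa using integral_smul_deriv_eq_deriv_smul (u := fun s => s - m) (u' := fun _ => 1)
      (fun x _ => (hasDerivAt_id x).sub_const m) hw
      intervalIntegrable_const hw'.intervalIntegrable
  have hker : ∫ s in a..b, (s - m) = 0 := by
    rw [integral_sub intervalIntegrable_id intervalIntegrable_const, integral_id,
      intervalIntegral.integral_const, hm, smul_eq_mul]
    ring
  simp_rw [smul_sub]
  rw [integral_sub (f := fun s => (s - m) • w' s) (g := fun s => (s - m) • w' m)
    ((continuousOn_id.sub continuousOn_const).smul hw').intervalIntegrable
    (Continuous.intervalIntegrable (by fun_prop) _ _), intervalIntegral.integral_smul_const, hker,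
    zero_smul, sub_zero, hparts, show b - m = (b - a) / 2 by linarith,
    show a - m = -((b - a) / 2) by linarith]
  module

lemma trapezoidRuleError_le [CompleteSpace H] {w w' w'' : ℝ → H} {a b K : ℝ} (hab : a ≤ b)
    (hw : ∀ x ∈ Set.Icc a b, HasDerivAt w (w' x) x)
    (hw' : ∀ x ∈ Set.Icc a b, HasDerivAt w' (w'' x) x)
    (hK : ∀ x ∈ Set.Icc a b, ‖w'' x‖ ≤ K) :
    trapezoidRuleError w a b ≤ K * (b - a) ^ 3 / 4 := by
  rcases hab.eq_or_lt with rfl | hab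
  · simp [trapezoidRuleError]
  set m := (a + b) / 2 with hm
  have hba : 0 < b - a := sub_pos.2 hab
  have hbound : ∀ x ∈ Set.uIoc a b, ‖(x - m) • (w' x - w' m)‖ ≤ K * (b - a) ^ 2 / 4 := by
    intro x hx
    rw [Set.uIoc_of_le hab.le] at hx
    have hdist : |x - m| ≤ (b - a) / 2 := abs_le.2 ⟨by linarith [hx.1], by linarith [hx.2]⟩
    have hK0 : 0 ≤ K := (norm_nonneg _).trans (hK a ⟨le_rfl, hab.le⟩)
    have hlip : ‖w' x - w' m‖ ≤ K * |x - m| :=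
      (convex_Icc a b).norm_image_sub_le_of_norm_hasDerivWithin_le
        (fun y hy => (hw' y hy).hasDerivWithinAt) hK ⟨by linarith, by linarith⟩ ⟨hx.1.le, hx.2⟩
    rw [norm_smul, Real.norm_eq_abs]
    calc |x - m| * ‖w' x - w' m‖ ≤ (b - a) / 2 * (K * ((b - a) / 2)) := by
          gcongr
          exact hlip.trans (by gcongr)
      _ = K * (b - a) ^ 2 / 4 := by ring
  have herr : (2 : ℝ)⁻¹ • (w b + w a) - (b - a)⁻¹ • ∫ s in a..b, w s
      = (b - a)⁻¹ • ∫ s in a..b, (s - m) • (w' s - w' m) := by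
    rw [integral_eq_trapezoid_sub hab.le hw fun x hx => (hw' x hx).continuousAt.continuousWithinAt,
      smul_sub, smul_smul, show (b - a)⁻¹ * ((b - a) / 2) = 2⁻¹ by field_simp]
    abel
  calc trapezoidRuleError w a b = ‖∫ s in a..b, (s - m) • (w' s - w' m)‖ := by
        rw [trapezoidRuleError, herr, norm_smul, norm_inv, Real.norm_of_nonneg hba.le,
          mul_inv_cancel_left₀ hba.ne']
    _ ≤ K * (b - a) ^ 2 / 4 * |b - a| := norm_integral_le_of_norm_le_const hbound
    _ = K * (b - a) ^ 3 / 4 := by rw [abs_of_pos hba]; ring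

lemma trapezoidRuleError_le_rpow [CompleteSpace H] {w w' w'' : ℝ → H} {α C a b : ℝ}
    (hα : α ≤ 2) (hC : 0 ≤ C) (ha : 0 < a) (hab : a ≤ b)
    (hw : ∀ x ∈ Set.Icc a b, HasDerivAt w (w' x) x)
    (hw' : ∀ x ∈ Set.Icc a b, HasDerivAt w' (w'' x) x)
    (hw'' : ∀ x ∈ Set.Icc a b, ‖w'' x‖ ≤ C * x ^ (α - 2)) :
    trapezoidRuleError w a b ≤ C * a ^ (α - 2) * (b - a) ^ 3 / 4 :=
  trapezoidRuleError_le hab hw hw' fun x hx => (hw'' x hx).trans <|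
    mul_le_mul_of_nonneg_left (rpow_le_rpow_of_nonpos ha hx.1 (by linarith)) hC

end Quadrature

noncomputable def gradedMesh (k γ : ℝ) (n : ℕ) : ℝ := ((n : ℝ) * k) ^ γ

section GradedMesh

variable {k γ : ℝ}

lemma gradedMesh_zero (hγ : γ ≠ 0) : gradedMesh k γ 0 = 0 := by
  simp [gradedMesh, zero_rpow hγ]

lemma gradedMesh_one : gradedMesh k γ 1 = k ^ γ := by
  simp [gradedMesh]

lemma gradedMesh_pred {n : ℕ} (hn : 1 ≤ n) : gradedMesh k γ (n - 1) = (((n : ℝ) - 1) * k) ^ γ := by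
  rw [gradedMesh, Nat.cast_sub hn, Nat.cast_one]

lemma gradedMesh_pos (hk : 0 < k) {n : ℕ} (hn : 1 ≤ n) : 0 < gradedMesh k γ n := by
  have : (0 : ℝ) < n := by exact_mod_cast hn
  unfold gradedMesh
  positivity

lemma gradedMesh_mono (hk : 0 ≤ k) (hγ : 0 ≤ γ) : Monotone (gradedMesh k γ) := fun _ _ hmn =>
  rpow_le_rpow (by positivity) (by gcongr) hγ

lemma gradedMesh_div_one (hk : 0 < k) (N : ℕ) :
    gradedMesh k γ N / gradedMesh k γ 1 = (N : ℝ) ^ γ := by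
  rw [gradedMesh, gradedMesh_one, mul_rpow (Nat.cast_nonneg N) hk.le,
    mul_div_cancel_right₀ _ (rpow_pos_of_pos hk γ).ne']

lemma gradedMesh_sub_pred_le (hk : 0 < k) (hγ : 1 ≤ γ) {n : ℕ} (hn : 1 ≤ n) :
    gradedMesh k γ n - gradedMesh k γ (n - 1) ≤ γ * (n : ℝ) ^ (γ - 1) * k ^ γ := by
  have hn1 : (1 : ℝ) ≤ n := by exact_mod_cast hn
  rw [gradedMesh_pred hn, gradedMesh]
  refine (rpow_sub_rpow_le_mul_sub hγ (by nlinarith) (by nlinarith)).trans_eq ?_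
  rw [mul_rpow (by positivity) hk.le, mul_assoc, mul_assoc, rpow_sub_one hk.ne']
  field_simp
  ring

lemma gradedMesh_pred_rpow_le {q : ℝ} (hq : q ≤ 0) (hγ : 0 ≤ γ) (hk : 0 < k) {n : ℕ}
    (hn : 2 ≤ n) :
    gradedMesh k γ (n - 1) ^ q ≤ 2 ^ (-(γ * q)) * ((n : ℝ) ^ (γ * q) * k ^ (γ * q)) := by
  have hn2 : (2 : ℝ) ≤ n := by exact_mod_cast hn
  have hhalf : (n : ℝ) * k / 2 ≤ ((n : ℝ) - 1) * k := by nlinarith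
  rw [gradedMesh_pred (by omega), ← rpow_mul (by nlinarith)]
  calc (((n : ℝ) - 1) * k) ^ (γ * q) ≤ ((n : ℝ) * k / 2) ^ (γ * q) :=
        rpow_le_rpow_of_nonpos (by positivity) hhalf (mul_nonpos_of_nonneg_of_nonpos hγ hq)
    _ = 2 ^ (-(γ * q)) * ((n : ℝ) ^ (γ * q) * k ^ (γ * q)) := by
        rw [div_rpow (by positivity) zero_le_two, mul_rpow (by positivity) hk.le,
          rpow_neg zero_le_two]
        ring

end GradedMesh

section GradedMeshErrors

variable {H : Type*} [NormedAddCommGroup H] [NormedSpace ℝ H] [CompleteSpace H]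
  {α γ T C k : ℝ} {w w' w'' : ℝ → H}

lemma trapezoidRuleError_gradedMesh_le (hα : α ≤ 2) (hγ : 1 ≤ γ) (hC : 0 ≤ C) (hk : 0 < k)
    {n : ℕ} (hn : 2 ≤ n) (hnT : gradedMesh k γ n ≤ T)
    (hd1 : ∀ t ∈ Set.Ioc 0 T, HasDerivAt w (w' t) t)
    (hd2 : ∀ t ∈ Set.Ioc 0 T, HasDerivAt w' (w'' t) t)
    (hb2 : ∀ t ∈ Set.Ioc 0 T, ‖w'' t‖ ≤ C * t ^ (α - 2)) :
    trapezoidRuleError w (gradedMesh k γ (n - 1)) (gradedMesh k γ n)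
      ≤ C * 2 ^ (γ * (2 - α)) * γ ^ 3 / 4
          * ((n : ℝ) ^ (γ * (α + 1) - 3) * k ^ (γ * (α + 1))) := by
  have hn0 : (0 : ℝ) < n := by positivity
  have ha : 0 < gradedMesh k γ (n - 1) := gradedMesh_pos hk (by omega)
  have hab : gradedMesh k γ (n - 1) ≤ gradedMesh k γ n :=
    gradedMesh_mono hk.le (by linarith) (Nat.sub_le n 1)
  have hsub : Set.Icc (gradedMesh k γ (n - 1)) (gradedMesh k γ n) ⊆ Set.Ioc 0 T :=
    fun x hx => ⟨ha.trans_le hx.1, hx.2.trans hnT⟩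
  have hwidth := gradedMesh_sub_pred_le hk hγ (by omega : 1 ≤ n)
  have hleft := gradedMesh_pred_rpow_le (γ := γ) (q := α - 2) (by linarith) (by linarith) hk hn
  calc trapezoidRuleError w (gradedMesh k γ (n - 1)) (gradedMesh k γ n)
      ≤ C * gradedMesh k γ (n - 1) ^ (α - 2)
          * (gradedMesh k γ n - gradedMesh k γ (n - 1)) ^ 3 / 4 :=
        trapezoidRuleError_le_rpow hα hC ha hab (fun x hx => hd1 x (hsub hx))
          (fun x hx => hd2 x (hsub hx)) (fun x hx => hb2 x (hsub hx))
    _ ≤ C * (2 ^ (-(γ * (α - 2))) * ((n : ℝ) ^ (γ * (α - 2)) * k ^ (γ * (α - 2))))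
          * (γ * (n : ℝ) ^ (γ - 1) * k ^ γ) ^ 3 / 4 := by
        gcongr
    _ = C * 2 ^ (γ * (2 - α)) * γ ^ 3 / 4
          * ((n : ℝ) ^ (γ * (α + 1) - 3) * k ^ (γ * (α + 1))) := by
        have hn_exp : (n : ℝ) ^ (γ * (α + 1) - 3)
            = (n : ℝ) ^ (γ * (α - 2)) * ((n : ℝ) ^ (γ - 1)) ^ 3 := by
          rw [← rpow_natCast, ← rpow_mul hn0.le, ← rpow_add hn0]; ring_nf
        have hk_exp : k ^ (γ * (α + 1)) = k ^ (γ * (α - 2)) * (k ^ γ) ^ 3 := by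
          rw [← rpow_natCast, ← rpow_mul hk.le, ← rpow_add hk]; ring_nf
        rw [hn_exp, hk_exp, show -(γ * (α - 2)) = γ * (2 - α) by ring]
        ring

lemma gradedMesh_quadratureErrors_le (hα : 0 < α) (hα2 : α ≤ 2) (hγ : 1 ≤ γ) (hC : 0 ≤ C)
    (hk : 0 < k) {N : ℕ} (hN : 1 ≤ N) (hNT : gradedMesh k γ N ≤ T)
    (hd1 : ∀ t ∈ Set.Ioc 0 T, HasDerivAt w (w' t) t)
    (hd2 : ∀ t ∈ Set.Ioc 0 T, HasDerivAt w' (w'' t) t)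
    (hb1 : ∀ t ∈ Set.Ioc 0 T, ‖w' t‖ ≤ C * t ^ (α - 1))
    (hb2 : ∀ t ∈ Set.Ioc 0 T, ‖w'' t‖ ≤ C * t ^ (α - 2)) :
    rightRuleError w (gradedMesh k γ 0) (gradedMesh k γ 1)
        + ∑ n ∈ Icc 2 N, trapezoidRuleError w (gradedMesh k γ (n - 1)) (gradedMesh k γ n)
      ≤ k ^ (γ * (α + 1)) * (C / α + C * 2 ^ (γ * (2 - α)) * γ ^ 3 / 4
          * ∑ n ∈ Icc 2 N, (n : ℝ) ^ (γ * (α + 1) - 3)) := by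
  have hmono := gradedMesh_mono hk.le (by linarith : 0 ≤ γ)
  have hsub : Set.Ioc 0 (k ^ γ) ⊆ Set.Ioc 0 T :=
    Set.Ioc_subset_Ioc_right (gradedMesh_one (k := k) (γ := γ) ▸ (hmono hN).trans hNT)
  have hfirst := rightRuleError_zero_le hα hC (by positivity) (fun x hx => hd1 x (hsub hx))
    (fun x hx => hb1 x (hsub hx))
  have hsteps := sum_le_sum fun n hn => trapezoidRuleError_gradedMesh_le hα2 hγ hC hk
    (mem_Icc.1 hn).1 ((hmono (mem_Icc.1 hn).2).trans hNT) hd1 hd2 hb2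
  rw [← rpow_mul hk.le] at hfirst
  rw [← mul_sum, ← sum_mul] at hsteps
  rw [gradedMesh_zero (by linarith), gradedMesh_one]
  linarith

end GradedMeshErrors

lemma add_mul_sum_rpow_neg_one_le_mul_log {A D : ℝ} (hA : 0 ≤ A) (hD : 0 ≤ D) {N : ℕ}
    (hN : 2 ≤ N) :
    A + D * ∑ n ∈ Icc 2 N, (n : ℝ) ^ (-1 : ℝ) ≤ (A / log 2 + D) * log N := by
  have hlog2 : 0 < log 2 := log_pos one_lt_two
  have hlogN : log 2 ≤ log N := log_le_log two_pos (by exact_mod_cast hN)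
  have hA' : A ≤ A / log 2 * log N := by
    rw [div_mul_eq_mul_div, le_div_iff₀ hlog2]
    gcongr
  nlinarith [sum_Icc_rpow_neg_one_le_log (by omega : 1 ≤ N)]

lemma rpow_mul_add_mul_sum_rpow_le {A D p k : ℝ} (hA : 0 ≤ A) (hD : 0 ≤ D) (hp : 0 < p)
    (hk : 0 < k) {N : ℕ} (hN : 1 ≤ N) :
    k ^ p * (A + D * ∑ n ∈ Icc 2 N, (n : ℝ) ^ (p - 1)) ≤ (A + D * (1 + p⁻¹)) * (N * k) ^ p := by
  have hkN : k ^ p ≤ (N * k) ^ p :=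
    rpow_le_rpow hk.le (le_mul_of_one_le_left hk.le (by exact_mod_cast hN)) hp.le
  have hsum := mul_le_mul_of_nonneg_left (sum_Icc_rpow_sub_one_le hp hN)
    (by positivity : 0 ≤ D * k ^ p)
  rw [mul_rpow (Nat.cast_nonneg N) hk.le] at hkN ⊢
  nlinarith [rpow_pos_of_pos hk p]

/-- Lemma 4.5: with `w = A v` satisfying `‖w'(t)‖ ≤ C t^{α-1}`,
`‖w''(t)‖ ≤ C t^{α-2}` on `(0,T]` and the graded mesh `tₙ = (nk)^γ` with
`γ ≥ 2/(α+1)`, the truncation errors `R₁^{n-1/2}` satisfy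
`Σ_{n=1}^N kₙ ‖R₁^{n-1/2}‖ ≤ C' k²` (with a log factor when `γ = 2/(α+1)`). -/
theorem stmt_13 {H : Type*} [NormedAddCommGroup H] [NormedSpace ℝ H] [CompleteSpace H]
    (α γ T C : ℝ) (hα : 0 < α ∧ α < 1) (hγ : 2 / (α + 1) ≤ γ) (hT : 0 < T) (hC : 0 < C)
    (w w' w'' : ℝ → H)
    (hd1 : ∀ t ∈ Set.Ioc (0:ℝ) T, HasDerivAt w (w' t) t)
    (hd2 : ∀ t ∈ Set.Ioc (0:ℝ) T, HasDerivAt w' (w'' t) t)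
    (hb1 : ∀ t ∈ Set.Ioc (0:ℝ) T, ‖w' t‖ ≤ C * t ^ (α - 1))
    (hb2 : ∀ t ∈ Set.Ioc (0:ℝ) T, ‖w'' t‖ ≤ C * t ^ (α - 2)) :
    ∃ C' > 0, ∀ N : ℕ, 2 ≤ N →
      ∀ k : ℝ, k = T ^ (1/γ) / N →
      ∀ t : ℕ → ℝ, (∀ n : ℕ, t n = ((n : ℝ) * k) ^ γ) →
      (t 1 - t 0) * ‖w (t 1) - (t 1 - t 0)⁻¹ • ∫ s in (t 0)..(t 1), w s‖
        + ∑ n ∈ Finset.Icc 2 N, (t n - t (n - 1)) *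
            ‖(2:ℝ)⁻¹ • (w (t n) + w (t (n - 1)))
              - (t n - t (n - 1))⁻¹ • ∫ s in (t (n - 1))..(t n), w s‖
      ≤ C' * (if γ = 2 / (α + 1) then k ^ 2 * Real.log (t N / t 1) else k ^ 2) := by
  obtain ⟨hα0, hα1⟩ := hα
  have hγ1 : 1 ≤ γ := ((one_le_div (by linarith)).2 (by linarith)).trans hγ
  have hβ : 2 ≤ γ * (α + 1) := (div_le_iff₀ (by linarith)).1 hγ
  set A := C / α
  set D := C * 2 ^ (γ * (2 - α)) * γ ^ 3 / 4
  have hA : 0 < A := by positivity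
  have hD : 0 ≤ D := by positivity
  have hmesh : ∀ N : ℕ, 2 ≤ N → ∀ k, k = T ^ (1 / γ) / N →
      0 < k ∧ N * k = T ^ (1 / γ) ∧ gradedMesh k γ N = T := by
    rintro N hN k rfl
    have hN0 : (0 : ℝ) < N := by positivity
    refine ⟨by positivity, mul_div_cancel₀ _ hN0.ne', ?_⟩
    rw [gradedMesh, mul_div_cancel₀ _ hN0.ne', ← rpow_mul hT.le, one_div_mul_cancel (by linarith),
      rpow_one]
  by_cases hcase : γ = 2 / (α + 1)
  · refine ⟨(A / log 2 + D) / γ, by positivity, fun N hN k hk t ht => ?_⟩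
    obtain rfl : t = gradedMesh k γ := funext ht
    obtain ⟨hk, -, hNT⟩ := hmesh N hN k hk
    have herr := gradedMesh_quadratureErrors_le hα0 (by linarith) hγ1 hC.le hk (by omega) hNT.le
      hd1 hd2 hb1 hb2
    rw [show γ * (α + 1) = 2 by rw [hcase]; field_simp, show (2 : ℝ) - 3 = -1 by norm_num,
      rpow_two] at herr
    rw [if_pos hcase, gradedMesh_div_one hk, log_rpow (by positivity)]
    refine herr.trans <| (mul_le_mul_of_nonneg_left
      (add_mul_sum_rpow_neg_one_le_mul_log hA.le hD hN) (sq_nonneg k)).trans_eq ?_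
    field_simp
  · set p := γ * (α + 1) - 2
    have hp : 0 < p := lt_of_le_of_ne (by linarith) fun h => hcase (by field_simp; linarith)
    refine ⟨(A + D * (1 + p⁻¹)) * (T ^ (1 / γ)) ^ p, by positivity, fun N hN k hk t ht => ?_⟩
    obtain rfl : t = gradedMesh k γ := funext ht
    obtain ⟨hk, hNk, hNT⟩ := hmesh N hN k hk
    have herr := gradedMesh_quadratureErrors_le hα0 (by linarith) hγ1 hC.le hk (by omega) hNT.le
      hd1 hd2 hb1 hb2
    rw [show γ * (α + 1) = p + 2 by ring, show p + 2 - 3 = p - 1 by ring, rpow_add hk,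
      rpow_two] at herr
    have hsum := rpow_mul_add_mul_sum_rpow_le hA.le hD hp hk (by omega : 1 ≤ N)
    rw [hNk] at hsum
    rw [if_neg hcase]
    calc _ ≤ k ^ p * k ^ 2 * (A + D * ∑ n ∈ Icc 2 N, (n : ℝ) ^ (p - 1)) := herr
      _ ≤ (A + D * (1 + p⁻¹)) * (T ^ (1 / γ)) ^ p * k ^ 2 := by
        rw [mul_right_comm]
        gcongr
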